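/- arXiv:1511.09321 — 5 statements merged into one kernel-verified Lean document; each statement's English description precedes it below -/
import Mathlib

section
/- Let n ≥ 1 and let s = (s_1, ..., s_n) be a sequence of positive integers with s_i ≥ s_{i+1} for i = 1, ..., n-1. Then s is realisable (as a loopless multigraph) if and only if the sum s_1 + s_2 + ... + s_n is even and s_2 + s_3 + ... + s_n ≥ s_1. -/
/-- A sequence `s` of length `n` is realisable as a loopless multigraph if there is a
symmetric matrix of edge multiplicities with zero diagonal whose row sums are `s`. -/
def Realisable (n : ℕ) (s : Fin n → ℕ) : Prop :=
  ∃ A : Fin n → Fin n → ℕ,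
    (∀ i, A i i = 0) ∧ (∀ i j, A i j = A j i) ∧ (∀ i, ∑ j, A i j = s i)

open Finset

lemma realisable_aux : ∀ N : ℕ, ∀ n : ℕ, ∀ s : Fin n → ℕ, ∑ i, s i = N → Even N →
    (∀ i, 2 * s i ≤ N) → Realisable n s := by
  intro N
  induction N using Nat.strong_induction_on with
  | _ N ih =>
    intro n s hsum heven hmax
    rcases Nat.eq_zero_or_pos N with h0 | hposN
    · subst h0
      refine ⟨fun _ _ => 0, fun _ => rfl, fun _ _ => rfl, fun i => ?_⟩
      have : s i = 0 := by
        have := (Finset.sum_eq_zero_iff.mp hsum) i (mem_univ i)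
        exact this
      simp [this]
    · -- univ is nonempty
      have hne : (univ : Finset (Fin n)).Nonempty := by
        rcases Nat.eq_zero_or_pos n with h | h
        · subst h
          simp at hsum
          omega
        · exact Finset.univ_nonempty_iff.mpr ⟨⟨0, h⟩⟩
      obtain ⟨i, _, hmaxi⟩ := Finset.exists_max_image univ s hne
      -- s i ≥ 1
      have hsi : 1 ≤ s i := by
        by_contra h
        have hsi0 : s i = 0 := by omega
        have : ∑ k, s k = 0 := Finset.sum_eq_zero fun k _ => by
          have := hmaxi k (mem_univ k); omega
        omega
      -- erase i is nonempty
      have hsum_split : ∑ k, s k = s i + ∑ k ∈ univ.erase i, s k :=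
        (Finset.add_sum_erase univ s (mem_univ i)).symm
      have herase_pos : 1 ≤ ∑ k ∈ univ.erase i, s k := by
        have := hmax i; omega
      have herase_ne : (univ.erase i).Nonempty := by
        by_contra h
        rw [not_nonempty_iff_eq_empty] at h
        rw [h] at hsum_split; simp at hsum_split
        have := hmax i; omega
      obtain ⟨j, hj, hmaxj⟩ := Finset.exists_max_image (univ.erase i) s herase_ne
      have hji : j ≠ i := Finset.ne_of_mem_erase hj
      have hsj : 1 ≤ s j := by
        by_contra h
        have : ∑ k ∈ univ.erase i, s k = 0 := Finset.sum_eq_zero fun k hk => by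
          have := hmaxj k hk; omega
        omega
      -- the reduced sequence
      set s' : Fin n → ℕ := fun k => if k = i then s i - 1 else if k = j then s j - 1 else s k
        with hs'def
      have hs'i : s' i = s i - 1 := by simp [hs'def]
      have hs'j : s' j = s j - 1 := by simp [hs'def, hji]
      have hs'other : ∀ k, k ≠ i → k ≠ j → s' k = s k := by
        intro k h1 h2; simp [hs'def, h1, h2]
      have hjmem : j ∈ univ.erase i := hj
      have hsum_split2 : ∑ k ∈ univ.erase i, s k = s j + ∑ k ∈ (univ.erase i).erase j, s k :=
        (Finset.add_sum_erase _ s hjmem).symm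
      have hsum_split' : ∑ k, s' k = s' i + ∑ k ∈ univ.erase i, s' k :=
        (Finset.add_sum_erase univ s' (mem_univ i)).symm
      have hsum_split2' : ∑ k ∈ univ.erase i, s' k = s' j + ∑ k ∈ (univ.erase i).erase j, s' k :=
        (Finset.add_sum_erase _ s' hjmem).symm
      have hRsame : ∑ k ∈ (univ.erase i).erase j, s' k = ∑ k ∈ (univ.erase i).erase j, s k := by
        apply Finset.sum_congr rfl
        intro k hk
        exact hs'other k (Finset.ne_of_mem_erase (Finset.mem_of_mem_erase hk))
          (Finset.ne_of_mem_erase hk)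
      have hNsum' : ∑ k, s' k + 2 = N := by
        rw [hsum_split', hsum_split2', hRsame, hs'i, hs'j]
        rw [hsum_split, hsum_split2] at hsum
        omega
      obtain ⟨m, hm⟩ := heven
      have hN2 : 2 ≤ N := by omega
      -- apply induction hypothesis
      obtain ⟨A', hd', hsym', hrow'⟩ :=
        ih (N - 2) (by omega) n s' (by omega) ⟨m - 1, by omega⟩ (by
          intro k
          by_cases hki : k = i
          · subst hki; rw [hs'i]; have := hmax k; omega
          · by_cases hkj : k = j
            · subst hkj; rw [hs'j]; have := hmax k; omega
            · rw [hs'other k hki hkj]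
              have hki' : s k ≤ s i := hmaxi k (mem_univ k)
              have hkj' : s k ≤ s j := hmaxj k (Finset.mem_erase.mpr ⟨hki, mem_univ k⟩)
              have hkR : s k ≤ ∑ l ∈ (univ.erase i).erase j, s l :=
                Finset.single_le_sum (fun _ _ => Nat.zero_le _)
                  (Finset.mem_erase.mpr ⟨hkj, Finset.mem_erase.mpr ⟨hki, mem_univ k⟩⟩)
              rw [hsum_split, hsum_split2] at hsum
              omega)
      refine ⟨fun k l => A' k l + (if (k = i ∧ l = j) ∨ (k = j ∧ l = i) then 1 else 0),
        ?_, ?_, ?_⟩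
      · intro k
        dsimp only
        have : ¬((k = i ∧ k = j) ∨ (k = j ∧ k = i)) := by
          rintro (⟨rfl, rfl⟩ | ⟨rfl, rfl⟩) <;> exact hji rfl
        simp [this, hd' k]
      · intro k l
        dsimp only
        have h1 : ((k = i ∧ l = j) ∨ (k = j ∧ l = i)) ↔ ((l = i ∧ k = j) ∨ (l = j ∧ k = i)) := by
          tauto
        rw [hsym' k l, if_congr h1 rfl rfl]
      · intro k
        dsimp only
        rw [Finset.sum_add_distrib, hrow' k]
        by_cases hki : k = i
        · have hcond : ∀ l, ((k = i ∧ l = j) ∨ (k = j ∧ l = i)) ↔ l = j := by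
            intro l
            constructor
            · rintro (⟨-, h⟩ | ⟨h1, -⟩)
              · exact h
              · exact absurd (h1.symm.trans hki) hji
            · intro h; exact Or.inl ⟨hki, h⟩
          have hsum1 : (∑ l, if (k = i ∧ l = j) ∨ (k = j ∧ l = i) then 1 else 0) =
              ∑ l, if l = j then (1:ℕ) else 0 :=
            Finset.sum_congr rfl fun l _ => if_congr (hcond l) rfl rfl
          rw [hsum1, Finset.sum_ite_eq' univ j (fun _ => 1), if_pos (mem_univ j), hki, hs'i]
          omega
        · by_cases hkj : k = j
          · have hcond : ∀ l, ((k = i ∧ l = j) ∨ (k = j ∧ l = i)) ↔ l = i := by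
              intro l
              constructor
              · rintro (⟨h1, -⟩ | ⟨-, h⟩)
                · exact absurd (hkj.symm.trans h1) hji
                · exact h
              · intro h; exact Or.inr ⟨hkj, h⟩
            have hsum1 : (∑ l, if (k = i ∧ l = j) ∨ (k = j ∧ l = i) then 1 else 0) =
                ∑ l, if l = i then (1:ℕ) else 0 :=
              Finset.sum_congr rfl fun l _ => if_congr (hcond l) rfl rfl
            rw [hsum1, Finset.sum_ite_eq' univ i (fun _ => 1), if_pos (mem_univ i), hkj, hs'j]
            omega
          · have hcond : ∀ l, ¬((k = i ∧ l = j) ∨ (k = j ∧ l = i)) := by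
              rintro l (⟨h1, -⟩ | ⟨h1, -⟩)
              · exact hki h1
              · exact hkj h1
            have hsum1 : (∑ l, if (k = i ∧ l = j) ∨ (k = j ∧ l = i) then 1 else 0) = (0:ℕ) :=
              Finset.sum_eq_zero fun l _ => if_neg (hcond l)
            rw [hsum1, add_zero]
            exact hs'other k hki hkj

theorem realisable_iff (n : ℕ) (hn : 1 ≤ n) (s : Fin n → ℕ)
    (hpos : ∀ i, 0 < s i) (hmono : Antitone s) :
    Realisable n s ↔
      Even (∑ i, s i) ∧
        s ⟨0, hn⟩ ≤ ∑ i ∈ Finset.univ.erase (⟨0, hn⟩ : Fin n), s i := by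
  set i0 : Fin n := ⟨0, hn⟩ with hi0
  constructor
  · rintro ⟨A, hd, hsym, hrow⟩
    constructor
    · -- evenness via ZMod 2
      have hz : ((∑ i, s i : ℕ) : ZMod 2) = 0 := by
        have h1 : ((∑ i, s i : ℕ) : ZMod 2) =
            ∑ p ∈ (univ ×ˢ univ : Finset (Fin n × Fin n)), ((A p.1 p.2 : ℕ) : ZMod 2) := by
          push_cast
          rw [Finset.sum_product]
          exact Finset.sum_congr rfl fun i _ => by rw [← hrow i]; push_cast; ring
        rw [h1]
        apply Finset.sum_ninvolution (g := Prod.swap)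
        · intro p
          have : A p.2 p.1 = A p.1 p.2 := hsym p.2 p.1
          simp only [Prod.fst_swap, Prod.snd_swap, this]
          rw [← two_mul, show ((2:ZMod 2)) = 0 by decide, zero_mul]
        · intro p hp
          intro h
          apply hp
          have : p.1 = p.2 := by
            have h2 := congrArg Prod.fst h
            simpa using h2.symm
          rw [this, hd p.2]
          simp
        · intro p; exact Finset.mem_product.mpr ⟨mem_univ _, mem_univ _⟩
        · intro p; simp
      rw [ZMod.natCast_eq_zero_iff] at hz
      exact even_iff_two_dvd.mpr hz
    · rw [← hrow i0]
      have h1 : ∑ j, A i0 j = ∑ j ∈ univ.erase i0, A i0 j := by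
        rw [← Finset.add_sum_erase univ (A i0) (mem_univ i0), hd i0, zero_add]
      rw [h1]
      apply Finset.sum_le_sum
      intro j hj
      calc A i0 j = A j i0 := hsym i0 j
        _ ≤ ∑ k, A j k := Finset.single_le_sum (fun _ _ => Nat.zero_le _) (mem_univ i0)
        _ = s j := hrow j
  · rintro ⟨heven, hle⟩
    apply realisable_aux (∑ i, s i) n s rfl heven
    intro i
    have h1 : s i ≤ s i0 := hmono (by exact Fin.mk_le_of_le_val (Nat.zero_le _))
    have h2 : ∑ k, s k = s i0 + ∑ k ∈ univ.erase i0, s k :=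
      (Finset.add_sum_erase univ s (mem_univ i0)).symm
    omega
end

section
/- Let n ≥ 1 and let s = (s_1, ..., s_n) be a sequence of positive integers with s_i ≥ s_{i+1} for i = 1, ..., n-1. Then s is connected (i.e., realisable as a connected loopless multigraph) if and only if s is realisable and s_1 + s_2 + ... + s_n ≥ 2(n-1). -/
/-- A sequence `s` is connected if it admits a realisation as a loopless multigraph
whose underlying simple graph (adjacency: `i ≠ j` and at least one edge) is connected. -/
def ConnectedRealisable (n : ℕ) (s : Fin n → ℕ) : Prop :=
  ∃ A : Fin n → Fin n → ℕ,
    (∀ i, A i i = 0) ∧ (∀ i j, A i j = A j i) ∧ (∀ i, ∑ j, A i j = s i) ∧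
      (SimpleGraph.fromRel fun i j => A i j ≠ 0).Connected

/-!
Necessity: a realisation has even degree sum, no degree exceeds the sum of the others, and a
connected realisation has at least `n - 1` edges, each counted twice in the degree sum.

Sufficiency is by induction on the degree sum. If some degree is `1`, delete that vertex `a`,
lower the largest other degree by one, and reattach `a` as a leaf to a connected realisation of
the smaller sequence. Otherwise all degrees are at least `2`, so the sum exceeds `2(n - 1)`;
lower the two largest degrees by one and add an edge between them to a connected realisation of
the smaller sequence. In both cases choosing the largest degrees keeps every degree at most half
the new sum.
-/

open Finset SimpleGraph

variable {V W : Type*}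

def skeleton (A : V → V → ℕ) : SimpleGraph V := SimpleGraph.fromRel fun i j => A i j ≠ 0

theorem skeleton_mono {A B : V → V → ℕ} (hAB : A ≤ B) : skeleton A ≤ skeleton B := by
  intro i j hij
  simp only [skeleton, fromRel_adj, ← Nat.pos_iff_ne_zero] at hij ⊢
  exact ⟨hij.1, hij.2.imp (fun h => h.trans_le (hAB i j)) (fun h => h.trans_le (hAB j i))⟩

variable [Fintype V]

structure IsRealisation (A : V → V → ℕ) (d : V → ℕ) : Prop where
  diag_eq_zero : ∀ i, A i i = 0
  symm : ∀ i j, A i j = A j i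
  sum_row : ∀ i, ∑ j, A i j = d i

def HasConnectedRealisation (d : V → ℕ) : Prop :=
  ∃ A, IsRealisation A d ∧ (skeleton A).Connected

namespace IsRealisation

variable {A : V → V → ℕ} {d : V → ℕ}

theorem skeleton_adj (h : IsRealisation A d) {i j : V} :
    (skeleton A).Adj i j ↔ i ≠ j ∧ A i j ≠ 0 := by
  simp [skeleton, h.symm j i]

theorem even_sum (h : IsRealisation A d) : Even (∑ v, d v) := by
  let : LinearOrder V := LinearOrder.lift' _ (Fintype.equivFin V).injective
  let B : V → V → ℕ := fun i j => if i < j then A i j else 0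
  have hB : ∀ i j, A i j = B i j + B j i := by
    intro i j
    rcases lt_trichotomy i j with hij | rfl | hij
    · simp [B, hij, hij.not_gt]
    · simp [B, h.diag_eq_zero]
    · simp [B, hij, hij.not_gt, h.symm i j]
  refine ⟨∑ i, ∑ j, B i j, ?_⟩
  simp_rw [← h.sum_row, hB, sum_add_distrib]
  rw [sum_comm (f := fun i j => B j i)]

theorem two_mul_le_sum [DecidableEq V] (h : IsRealisation A d) (i : V) : 2 * d i ≤ ∑ v, d v := by
  have hcol : d i ≤ ∑ j ∈ univ.erase i, d j := calc
    d i = ∑ j ∈ univ.erase i, A j i := by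
      rw [← h.sum_row, ← sum_erase _ (h.diag_eq_zero i)]
      exact sum_congr rfl fun j _ => h.symm i j
    _ ≤ ∑ j ∈ univ.erase i, d j :=
      sum_le_sum fun j _ => h.sum_row j ▸ single_le_sum (fun _ _ => Nat.zero_le _) (mem_univ i)
  have := add_sum_erase univ d (mem_univ i)
  omega

theorem degree_le (h : IsRealisation A d) [DecidableRel (skeleton A).Adj] (i : V) :
    (skeleton A).degree i ≤ d i := calc
  (skeleton A).degree i = ∑ j ∈ (skeleton A).neighborFinset i, 1 := by
    rw [← card_neighborFinset_eq_degree, card_eq_sum_ones]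
  _ ≤ ∑ j ∈ (skeleton A).neighborFinset i, A i j :=
    sum_le_sum fun j hj =>
      Nat.one_le_iff_ne_zero.2 (h.skeleton_adj.1 ((mem_neighborFinset _ _ _).1 hj)).2
  _ ≤ d i := h.sum_row i ▸ sum_le_sum_of_subset (subset_univ _)

theorem two_mul_card_sub_one_le_sum (h : IsRealisation A d) (hc : (skeleton A).Connected) :
    2 * (Fintype.card V - 1) ≤ ∑ v, d v := by
  classical
  have hE := hc.card_vert_le_card_edgeSet_add_one
  rw [Nat.card_eq_fintype_card, Nat.card_eq_card_toFinset, Set.toFinset_card,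
    ← edgeFinset_card] at hE
  calc 2 * (Fintype.card V - 1) ≤ 2 * #(skeleton A).edgeFinset := by omega
  _ = ∑ v, (skeleton A).degree v := (sum_degrees_eq_twice_card_edges _).symm
  _ ≤ ∑ v, d v := sum_le_sum fun v _ => h.degree_le v

theorem add {B : V → V → ℕ} {d' : V → ℕ} (h : IsRealisation A d) (h' : IsRealisation B d') :
    IsRealisation (A + B) (d + d') where
  diag_eq_zero i := by simp [h.diag_eq_zero, h'.diag_eq_zero]
  symm i j := by simp [h.symm i j, h'.symm i j]
  sum_row i := by simp [sum_add_distrib, h.sum_row, h'.sum_row]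

end IsRealisation

def edgeMatrix [DecidableEq V] (i j : V) : V → V → ℕ :=
  fun u v => if s(u, v) = s(i, j) then 1 else 0

theorem isRealisation_edgeMatrix [DecidableEq V] {i j : V} (hij : i ≠ j) :
    IsRealisation (edgeMatrix i j) (Pi.single i 1 + Pi.single j 1) where
  diag_eq_zero u := by simp [edgeMatrix]; grind
  symm u v := by simp [edgeMatrix, Sym2.eq_swap]
  sum_row u := by
    by_cases hi : u = i
    · subst hi; simp [edgeMatrix, hij]
    by_cases hj : u = j
    · subst hj; simp [edgeMatrix, hi]
    · simp [edgeMatrix, hi, hj]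

theorem HasConnectedRealisation.add_edge [DecidableEq V] {d : V → ℕ}
    (h : HasConnectedRealisation d) {i j : V} (hij : i ≠ j) :
    HasConnectedRealisation (d + Pi.single i 1 + Pi.single j 1) := by
  obtain ⟨A, hA, hc⟩ := h
  rw [add_assoc]
  exact ⟨A + edgeMatrix i j, hA.add (isRealisation_edgeMatrix hij),
    hc.mono (skeleton_mono le_self_add)⟩

def attachLeaf [DecidableEq W] (A : W → W → ℕ) (b : W) : Option W → Option W → ℕ
  | none, none => 0
  | none, some y => if y = b then 1 else 0
  | some x, none => if x = b then 1 else 0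
  | some x, some y => A x y

theorem HasConnectedRealisation.attach_leaf [Fintype W] [DecidableEq W] {d : W → ℕ}
    (h : HasConnectedRealisation d) (b : W) :
    HasConnectedRealisation fun o : Option W => o.elim 1 (d + Pi.single b 1) := by
  obtain ⟨A, hA, hc⟩ := h
  refine ⟨attachLeaf A b, ⟨?_, ?_, ?_⟩, ?_⟩
  · rintro (_ | x) <;> simp [attachLeaf, hA.diag_eq_zero]
  · rintro (_ | x) (_ | y) <;> simp [attachLeaf, hA.symm]
  · rintro (_ | x) <;> simp [attachLeaf, hA.sum_row, Pi.single_apply, add_comm]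
  · let hsome : skeleton A →g skeleton (attachLeaf A b) :=
      ⟨some, fun {x y} hxy => by simpa [skeleton, attachLeaf] using hxy⟩
    rw [connected_iff_exists_forall_reachable]
    refine ⟨some b, ?_⟩
    rintro (_ | x)
    · exact Adj.reachable (by simp [skeleton, attachLeaf])
    · exact (hc.preconnected b x).map hsome

theorem HasConnectedRealisation.comp_equiv [Fintype W] {d : W → ℕ}
    (h : HasConnectedRealisation d) (e : V ≃ W) : HasConnectedRealisation (d ∘ e) := by
  obtain ⟨A, hA, hc⟩ := h
  refine ⟨fun u v => A (e u) (e v),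
    ⟨fun u => hA.diag_eq_zero _, fun u v => hA.symm _ _, fun u => ?_⟩, ?_⟩
  · exact (e.sum_comp (A (e u))).trans (hA.sum_row (e u))
  · have : skeleton (fun u v => A (e u) (e v)) = (skeleton A).comap e := by
      ext u v
      simp [skeleton, e.injective.ne_iff]
    rw [this]
    exact (Iso.comap e _).connected_iff.2 hc

theorem hasConnectedRealisation_zero [Subsingleton V] [Nonempty V] :
    HasConnectedRealisation (0 : V → ℕ) :=
  ⟨0, ⟨fun _ => rfl, fun _ _ => rfl, fun _ => by simp⟩,
    (connected_iff_exists_forall_reachable _).2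
      ⟨Classical.arbitrary V, fun w => Subsingleton.elim (Classical.arbitrary V) w ▸ .refl _⟩⟩

theorem two_mul_lt_sum [DecidableEq V] {d : V → ℕ} {u v w : V} (huv : u ≠ v) (huw : u ≠ w)
    (hvw : v ≠ w) (hvu : d v ≤ d u) (hw : 0 < d w) : 2 * d v < ∑ x, d x := by
  have := sum_le_sum_of_subset (f := d) (subset_univ {u, v, w})
  rw [sum_insert (by simp [huv, huw]), sum_insert (by simp [hvw]), sum_singleton] at this
  omega

/-- Positivity is only demanded when there are two or more vertices, so that `0` on a single
vertex is admissible and serves as the base of the induction. -/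
structure IsAdmissible (d : V → ℕ) : Prop where
  pos : 1 < Fintype.card V → ∀ v, 0 < d v
  even_sum : Even (∑ v, d v)
  two_mul_le_sum : ∀ v, 2 * d v ≤ ∑ u, d u
  two_mul_card_sub_one_le_sum : 2 * (Fintype.card V - 1) ≤ ∑ v, d v

namespace IsAdmissible

variable [DecidableEq V] {d : V → ℕ}

theorem exists_edge_reduction (hd : IsAdmissible d) (hV : 1 < Fintype.card V)
    (h2 : ∀ v, 2 ≤ d v) : ∃ (i j : V) (t : V → ℕ), i ≠ j ∧ IsAdmissible t ∧
      ∑ v, t v < ∑ v, d v ∧ d = t + Pi.single i 1 + Pi.single j 1 := by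
  have : Nonempty V := Fintype.card_pos_iff.1 (by omega)
  obtain ⟨i, hi⟩ := Finite.exists_max d
  obtain ⟨j, hji, hj⟩ : ∃ j, j ≠ i ∧ ∀ v, v ≠ i → d v ≤ d j := by
    have : Nonempty {v // v ≠ i} := Fintype.card_pos_iff.1 (by simp; omega)
    obtain ⟨⟨j, hji⟩, hj⟩ := Finite.exists_max fun v : {v // v ≠ i} => d v
    exact ⟨j, hji, fun v hv => hj ⟨v, hv⟩⟩
  obtain ⟨t, hdt⟩ : ∃ t : V → ℕ, d = t + Pi.single i 1 + Pi.single j 1 := by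
    refine ⟨d - Pi.single i 1 - Pi.single j 1, funext fun v => ?_⟩
    have := h2 v
    simp only [Pi.add_apply, Pi.sub_apply, Pi.single_apply]
    split_ifs <;> omega
  have hti : d i = t i + 1 := by simpa [hji.symm] using congrFun hdt i
  have htj : d j = t j + 1 := by simpa [hji] using congrFun hdt j
  have hto : ∀ v, v ≠ i → v ≠ j → d v = t v := fun v hvi hvj => by
    simpa [Pi.single_apply, hvi, hvj] using congrFun hdt v
  have hsum : ∑ v, d v = ∑ v, t v + 2 := by simp [hdt, sum_add_distrib]
  have hcard : 2 * Fintype.card V ≤ ∑ v, d v := by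
    simpa [mul_comm] using sum_le_sum fun v (_ : v ∈ univ) => h2 v
  obtain ⟨k, hk⟩ := hd.even_sum
  refine ⟨i, j, t, hji.symm, ⟨fun _ v => ?_, ⟨k - 1, by omega⟩, fun v => ?_, by omega⟩,
    by omega, hdt⟩
  · have := h2 v
    rcases eq_or_ne v i with rfl | hvi
    · omega
    rcases eq_or_ne v j with rfl | hvj
    · omega
    · have := hto v hvi hvj
      omega
  · have := hd.two_mul_le_sum v
    rcases eq_or_ne v i with rfl | hvi
    · omega
    rcases eq_or_ne v j with rfl | hvj
    · omega
    · have := hto v hvi hvj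
      have := two_mul_lt_sum (Ne.symm hvi) hji.symm hvj (hi v) (by have := h2 j; omega)
      omega

theorem exists_leaf_reduction (hd : IsAdmissible d) (hV : 1 < Fintype.card V) {a : V}
    (ha : d a = 1) : ∃ (b : {v // v ≠ a}) (t : {v // v ≠ a} → ℕ), IsAdmissible t ∧
      ∑ x, t x < ∑ v, d v ∧
      d = (fun o => o.elim 1 (t + Pi.single b 1)) ∘ (Equiv.optionSubtypeNe a).symm := by
  have hW : Fintype.card {v // v ≠ a} = Fintype.card V - 1 := by simp
  have : Nonempty {v // v ≠ a} := Fintype.card_pos_iff.1 (by omega)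
  obtain ⟨b, hb⟩ := Finite.exists_max fun x : {v // v ≠ a} => d x
  have hb1 := hd.pos hV b
  obtain ⟨t, hdt⟩ :
      ∃ t : {v // v ≠ a} → ℕ, ∀ x : {v // v ≠ a}, d x = t x + if x = b then 1 else 0 :=
    ⟨fun x => d x - if x = b then 1 else 0, fun x => by
      dsimp only
      split_ifs with h
      · subst h; omega
      · omega⟩
  have htb : d b = t b + 1 := by simpa using hdt b
  have hto : ∀ x, x ≠ b → d x = t x := fun x hx => by simpa [hx] using hdt x
  have hsumW : ∑ v, d v = 1 + ∑ x : {v // v ≠ a}, d x := by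
    rw [Fintype.sum_eq_add_sum_subtype_ne d a, ha]
  have hsum : ∑ x : {v // v ≠ a}, d x = ∑ x, t x + 1 := by simp [hdt, sum_add_distrib]
  have hcard := hd.two_mul_card_sub_one_le_sum
  obtain ⟨k, hk⟩ := hd.even_sum
  refine ⟨b, t, ⟨fun hW' x => ?_, ⟨k - 1, by omega⟩, fun x => ?_, by omega⟩, by omega, ?_⟩
  · have hb2 : 2 ≤ d b := by
      by_contra! h
      have : ∑ x : {v // v ≠ a}, d x ≤ Fintype.card {v // v ≠ a} := by
        simpa using sum_le_sum fun x (_ : x ∈ univ) => (hb x).trans (Nat.le_of_lt_succ h)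
      omega
    rcases eq_or_ne x b with rfl | hxb
    · omega
    · exact hto x hxb ▸ hd.pos hV x
  · have := hd.two_mul_le_sum x
    rcases eq_or_ne x b with rfl | hxb
    · omega
    · have := hto x hxb
      have := two_mul_lt_sum (Subtype.coe_injective.ne hxb.symm) b.2 x.2 (hb x) (by omega)
      omega
  · funext v
    rcases eq_or_ne v a with rfl | hva
    · simp [ha]
    · simp [Equiv.optionSubtypeNe_symm_of_ne hva, Pi.single_apply, ← hdt]

theorem hasConnectedRealisation [Nonempty V] (hd : IsAdmissible d) :
    HasConnectedRealisation d := by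
  induction hm : ∑ v, d v using Nat.strong_induction_on generalizing V with
  | _ m ih =>
  by_cases hV : 1 < Fintype.card V
  swap
  · have : Subsingleton V := Fintype.card_le_one_iff_subsingleton.1 (not_lt.1 hV)
    have hd0 : d = 0 := funext fun v => by
      have := hd.two_mul_le_sum v
      rw [Fintype.sum_subsingleton _ v] at this
      simp only [Pi.zero_apply]
      omega
    exact hd0 ▸ hasConnectedRealisation_zero
  by_cases hleaf : ∃ a, d a = 1
  · obtain ⟨a, ha⟩ := hleaf
    obtain ⟨b, t, ht, hlt, rfl⟩ := hd.exists_leaf_reduction hV ha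
    have : Nonempty {v // v ≠ a} := ⟨b⟩
    exact ((ih _ (hm ▸ hlt) ht rfl).attach_leaf b).comp_equiv _
  · push Not at hleaf
    obtain ⟨i, j, t, hij, ht, hlt, rfl⟩ :=
      hd.exists_edge_reduction hV fun v => by have := hd.pos hV v; have := hleaf v; omega
    exact (ih _ (hm ▸ hlt) ht rfl).add_edge hij

end IsAdmissible

theorem isRealisation_iff {A : V → V → ℕ} {d : V → ℕ} : IsRealisation A d ↔
    (∀ i, A i i = 0) ∧ (∀ i j, A i j = A j i) ∧ ∀ i, ∑ j, A i j = d i :=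
  ⟨fun h => ⟨h.1, h.2, h.3⟩, fun ⟨h₁, h₂, h₃⟩ => ⟨h₁, h₂, h₃⟩⟩

theorem hasConnectedRealisation_iff [Nonempty V] {d : V → ℕ} (hpos : ∀ v, 0 < d v) :
    HasConnectedRealisation d ↔
      (∃ A, IsRealisation A d) ∧ 2 * (Fintype.card V - 1) ≤ ∑ v, d v := by
  classical
  refine ⟨fun ⟨A, hA, hc⟩ => ⟨⟨A, hA⟩, hA.two_mul_card_sub_one_le_sum hc⟩,
    fun ⟨⟨A, hA⟩, hcard⟩ => IsAdmissible.hasConnectedRealisation ?_⟩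
  exact ⟨fun _ => hpos, hA.even_sum, hA.two_mul_le_sum, hcard⟩

theorem connected_realisable_iff_general (n : ℕ) (hn : 1 ≤ n) (s : Fin n → ℕ)
    (hpos : ∀ i, 0 < s i) :
    ConnectedRealisable n s ↔ Realisable n s ∧ 2 * (n - 1) ≤ ∑ i, s i := by
  have : Nonempty (Fin n) := ⟨⟨0, hn⟩⟩
  have h := hasConnectedRealisation_iff hpos
  simp only [HasConnectedRealisation, isRealisation_iff, Fintype.card_fin, and_assoc] at h
  exact h

theorem connected_realisable_iff (n : ℕ) (hn : 1 ≤ n) (s : Fin n → ℕ)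
    (hpos : ∀ i, 0 < s i) (hmono : Antitone s) :
    ConnectedRealisable n s ↔ Realisable n s ∧ 2 * (n - 1) ≤ ∑ i, s i :=
  connected_realisable_iff_general n hn s hpos
end

section
/- Let n ≥ 1 and let s = (s_1, ..., s_n) be a sequence of positive integers with s_i ≥ s_{i+1} for i = 1, ..., n-1 and s_1 ≤ n-1. Then s is connected and graphic if and only if the sequence s' = (s_2 - 1, s_3 - 1, ..., s_{s_1+1} - 1, s_{s_1+2}, ..., s_n) of length n-1 is graphic and s_1 + s_2 + ... + s_n ≥ 2(n-1). -/
/-!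
Forward direction: a connected graph on `n` vertices has at least `n - 1` edges, which is the
degree-sum bound. For the graphic part, take a realisation of `s` in which vertex `1` misses as few
of the vertices `2, …, s₁ + 1` as possible. If it misses such an `i`, it is joined to some `j`
beyond them, and `deg j ≤ deg i` yields a neighbour `k` of `i` not adjacent to `j`; the 2-switch
replacing `1j, ik` by `1i, jk` preserves all degrees and contradicts minimality. So vertex `1` is
joined exactly to `2, …, s₁ + 1`, and deleting it realises `s'`.

Backward direction: a vertex joined to the first `s₁` vertices of a realisation of `s'` gives a
realisation of `s`. Among all realisations of `s`, take one with the fewest components. If it were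
disconnected, the degree-sum bound would give it at least `n - 1` edges, hence a cycle, hence an
edge `ab` that is not a bridge. For `z` outside the component of `a` and a neighbour `d` of `z`,
the 2-switch replacing `ab, zd` by `az, bd` preserves all degrees and merges the two components,
as `a` and `b` stay connected through the cycle.
-/

/-- A sequence `s` of length `n` is graphic if it is the degree sequence of a
finite simple graph on `n` vertices. -/
def Graphic (n : ℕ) (s : Fin n → ℕ) : Prop :=
  ∃ G : SimpleGraph (Fin n), ∃ _ : DecidableRel G.Adj, ∀ i, G.degree i = s i

/-- A sequence `s` is connected and graphic if it is the degree sequence of a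
connected finite simple graph on `n` vertices. -/
def ConnectedGraphic (n : ℕ) (s : Fin n → ℕ) : Prop :=
  ∃ G : SimpleGraph (Fin n), ∃ _ : DecidableRel G.Adj,
    G.Connected ∧ ∀ i, G.degree i = s i

namespace SimpleGraph

variable {V : Type*}

lemma ncard_neighborSet_eq_degree (G : SimpleGraph V) (v : V) [Fintype (G.neighborSet v)] :
    (G.neighborSet v).ncard = G.degree v := by
  rw [← card_neighborSet_eq_degree, ← Nat.card_eq_fintype_card, Nat.card_coe_set_eq]

lemma sum_ncard_neighborSet_eq_two_mul_card_edgeSet [Fintype V] (G : SimpleGraph V) :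
    ∑ v, (G.neighborSet v).ncard = 2 * Nat.card G.edgeSet := by
  classical
  simpa [ncard_neighborSet_eq_degree, edgeFinset_card] using G.sum_degrees_eq_twice_card_edges

lemma card_edgeSet_eq_of_ncard_neighborSet_eq [Finite V] {G G' : SimpleGraph V}
    (h : ∀ v, (G'.neighborSet v).ncard = (G.neighborSet v).ncard) :
    Nat.card G'.edgeSet = Nat.card G.edgeSet := by
  have := Fintype.ofFinite V
  have := G'.sum_ncard_neighborSet_eq_two_mul_card_edgeSet
  rw [funext h, G.sum_ncard_neighborSet_eq_two_mul_card_edgeSet] at this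
  omega

section TwoSwitch

def twoSwitch (G : SimpleGraph V) (a b c d : V) : SimpleGraph V :=
  G.deleteEdges {s(a, b), s(c, d)} ⊔ edge a c ⊔ edge b d

structure IsSwitchable (G : SimpleGraph V) (a b c d : V) : Prop where
  adj_ab : G.Adj a b
  adj_cd : G.Adj c d
  not_adj_ac : ¬G.Adj a c
  not_adj_bd : ¬G.Adj b d
  ne_ac : a ≠ c
  ne_bd : b ≠ d

variable {G : SimpleGraph V} {a b c d : V}

lemma twoSwitch_adj {x y : V} : (G.twoSwitch a b c d).Adj x y ↔
    (G.Adj x y ∧ s(x, y) ≠ s(a, b) ∧ s(x, y) ≠ s(c, d)) ∨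
      ((s(a, c) = s(x, y) ∨ s(b, d) = s(x, y)) ∧ x ≠ y) := by
  simp only [twoSwitch, sup_adj, deleteEdges_adj, Set.mem_insert_iff, Set.mem_singleton_iff,
    adj_edge]
  tauto

lemma twoSwitch_flip : G.twoSwitch a b c d = G.twoSwitch b a d c := by
  ext x y
  simp only [twoSwitch_adj, Sym2.eq_swap (a := b) (b := a), Sym2.eq_swap (a := d) (b := c)]
  tauto

lemma twoSwitch_comm : G.twoSwitch a b c d = G.twoSwitch c d a b := by
  ext x y
  simp only [twoSwitch_adj, Sym2.eq_swap (a := c) (b := a), Sym2.eq_swap (a := d) (b := b)]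
  tauto

lemma IsSwitchable.flip (h : G.IsSwitchable a b c d) : G.IsSwitchable b a d c :=
  ⟨h.adj_ab.symm, h.adj_cd.symm, h.not_adj_bd, h.not_adj_ac, h.ne_bd, h.ne_ac⟩

lemma IsSwitchable.comm (h : G.IsSwitchable a b c d) : G.IsSwitchable c d a b :=
  ⟨h.adj_cd, h.adj_ab, fun h' => h.not_adj_ac h'.symm, fun h' => h.not_adj_bd h'.symm,
    h.ne_ac.symm, h.ne_bd.symm⟩

lemma IsSwitchable.of_not_reachable (hab : G.Adj a b) (hcd : G.Adj c d)
    (hac : ¬G.Reachable a c) : G.IsSwitchable a b c d where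
  adj_ab := hab
  adj_cd := hcd
  not_adj_ac h := hac h.reachable
  not_adj_bd h := hac (hab.reachable.trans (h.reachable.trans hcd.symm.reachable))
  ne_ac h := hac (h ▸ .rfl)
  ne_bd h := hac (hab.reachable.trans (h ▸ hcd.symm.reachable))

lemma IsSwitchable.neighborSet_twoSwitch_left (h : G.IsSwitchable a b c d) :
    (G.twoSwitch a b c d).neighborSet a = insert c (G.neighborSet a \ {b}) := by
  have := h.adj_ab.ne
  have := h.adj_cd.symm
  have := h.not_adj_ac
  have := h.ne_ac
  ext y
  simp only [mem_neighborSet, twoSwitch_adj, Sym2.eq_iff, Set.mem_insert_iff, Set.mem_sdiff,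
    Set.mem_singleton_iff]
  grind

lemma neighborSet_twoSwitch_of_ne {x : V} (ha : x ≠ a) (hb : x ≠ b) (hc : x ≠ c)
    (hd : x ≠ d) : (G.twoSwitch a b c d).neighborSet x = G.neighborSet x := by
  ext y
  simp only [mem_neighborSet, twoSwitch_adj, Sym2.eq_iff]
  grind

lemma IsSwitchable.ncard_neighborSet_twoSwitch (h : G.IsSwitchable a b c d) (x : V) :
    ((G.twoSwitch a b c d).neighborSet x).ncard = (G.neighborSet x).ncard := by
  have left {a b c d} (h : G.IsSwitchable a b c d) :
      ((G.twoSwitch a b c d).neighborSet a).ncard = (G.neighborSet a).ncard := by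
    rw [h.neighborSet_twoSwitch_left]
    exact Set.ncard_exchange h.not_adj_ac h.adj_ab
  by_cases ha : x = a
  · subst ha; exact left h
  by_cases hb : x = b
  · subst hb; rw [twoSwitch_flip]; exact left h.flip
  by_cases hc : x = c
  · subst hc; rw [twoSwitch_comm]; exact left h.comm
  by_cases hd : x = d
  · subst hd; rw [twoSwitch_comm, twoSwitch_flip]; exact left h.comm.flip
  rw [neighborSet_twoSwitch_of_ne ha hb hc hd]

end TwoSwitch

section Components

variable {G G' : SimpleGraph V}

lemma Reachable.of_forall_adj_reachable (h : ∀ ⦃x y⦄, G.Adj x y → G'.Reachable x y)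
    {u v : V} (huv : G.Reachable u v) : G'.Reachable u v := by
  obtain ⟨p⟩ := huv
  induction p with
  | nil => rfl
  | cons hxy _ ih => exact (h hxy).trans ih

lemma card_connectedComponent_lt_of_forall_adj_reachable [Finite V]
    (h : ∀ ⦃x y⦄, G.Adj x y → G'.Reachable x y) {u v : V} (huv : G'.Reachable u v)
    (hnuv : ¬G.Reachable u v) :
    Nat.card G'.ConnectedComponent < Nat.card G.ConnectedComponent := by
  let f : G.ConnectedComponent → G'.ConnectedComponent :=
    ConnectedComponent.lift G'.connectedComponentMk fun _ _ p _ =>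
      ConnectedComponent.sound (p.reachable.of_forall_adj_reachable h)
  have hf : Function.Surjective f := fun c => c.ind fun v => ⟨G.connectedComponentMk v, rfl⟩
  by_contra! hle
  exact hnuv (ConnectedComponent.eq.mp
    ((hf.bijective_of_nat_card_le hle).injective (ConnectedComponent.sound huv)))

lemma IsAcyclic.card_edgeSet_add_card_connectedComponent_le [Finite V] (hG : G.IsAcyclic) :
    Nat.card G.edgeSet + Nat.card G.ConnectedComponent ≤ Nat.card V := by
  induction hE : Nat.card G.edgeSet generalizing G with
  | zero => simpa using Nat.card_le_card_of_surjective _ (fun c => c.exists_rep)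
  | succ k ih =>
    obtain ⟨e, he⟩ : G.edgeSet.Nonempty :=
      Set.nonempty_of_ncard_ne_zero (by rw [← Nat.card_coe_set_eq, hE]; omega)
    induction e using Sym2.ind with | h x y =>
    have hE' : Nat.card (G.deleteEdges {s(x, y)}).edgeSet = k := by
      rw [edgeSet_deleteEdges, Nat.card_coe_set_eq, Set.ncard_sdiff_singleton_of_mem he,
        ← Nat.card_coe_set_eq, hE, Nat.add_sub_cancel]
    have hlt := card_connectedComponent_lt_of_forall_adj_reachable
      (fun _ _ h => (deleteEdges_le _ h).reachable) (Adj.reachable he)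
      (isAcyclic_iff_forall_isBridge.mp hG he)
    have := ih (hG.anti (deleteEdges_le _)) hE'
    omega

lemma not_isAcyclic_of_not_preconnected [Finite V] (hG : ¬G.Preconnected)
    (hE : Nat.card V ≤ Nat.card G.edgeSet + 1) : ¬G.IsAcyclic := by
  obtain ⟨u, v, huv⟩ : ∃ u v, ¬G.Reachable u v := by simpa [Preconnected] using hG
  have : 1 < Nat.card G.ConnectedComponent := Finite.one_lt_card_iff_nontrivial.mpr
    ⟨_, _, fun h => huv (ConnectedComponent.exact h)⟩
  intro hac
  have := hac.card_edgeSet_add_card_connectedComponent_le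
  omega

lemma card_connectedComponent_twoSwitch_lt [Finite V] {a b c d : V} (hab : G.Adj a b)
    (hcd : G.Adj c d) (hbr : ¬G.IsBridge s(a, b)) (hac : ¬G.Reachable a c) :
    Nat.card (G.twoSwitch a b c d).ConnectedComponent < Nat.card G.ConnectedComponent := by
  classical
  have hsw := IsSwitchable.of_not_reachable hab hcd hac
  have hac' : (G.twoSwitch a b c d).Adj a c := twoSwitch_adj.mpr (.inr ⟨.inl rfl, hsw.ne_ac⟩)
  have hbd' : (G.twoSwitch a b c d).Adj b d := twoSwitch_adj.mpr (.inr ⟨.inr rfl, hsw.ne_bd⟩)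
  have hab' : (G.twoSwitch a b c d).Reachable a b := by
    obtain ⟨p, hp⟩ := reachable_deleteEdges_iff_exists_walk.mp (not_not.mp hbr)
    have hcd_notMem : s(c, d) ∉ p.edges := fun h =>
      hac (p.takeUntil c (p.fst_mem_support_of_mem_edges h)).reachable
    refine (p.toDeleteEdges {s(a, b), s(c, d)} ?_).reachable.mono
      (le_sup_left.trans le_sup_left)
    rintro e he (rfl | rfl)
    exacts [hp he, hcd_notMem he]
  have hcd' : (G.twoSwitch a b c d).Reachable c d :=
    hac'.symm.reachable.trans (hab'.trans hbd'.reachable)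
  have hreach : ∀ ⦃x y⦄, G.Adj x y → (G.twoSwitch a b c d).Reachable x y := by
    intro x y hxy
    by_cases h₁ : s(x, y) = s(a, b)
    · rcases Sym2.eq_iff.mp h₁ with ⟨rfl, rfl⟩ | ⟨rfl, rfl⟩
      exacts [hab', hab'.symm]
    by_cases h₂ : s(x, y) = s(c, d)
    · rcases Sym2.eq_iff.mp h₂ with ⟨rfl, rfl⟩ | ⟨rfl, rfl⟩
      exacts [hcd', hcd'.symm]
    exact (twoSwitch_adj.mpr (.inl ⟨hxy, h₁, h₂⟩)).reachable
  exact card_connectedComponent_lt_of_forall_adj_reachable hreach hac'.reachable hac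

theorem exists_connected_ncard_neighborSet_eq [Finite V] [Nonempty V]
    (hpos : ∀ v, (G.neighborSet v).Nonempty) (hE : Nat.card V ≤ Nat.card G.edgeSet + 1) :
    ∃ H : SimpleGraph V, H.Connected ∧
      ∀ v, (H.neighborSet v).ncard = (G.neighborSet v).ncard := by
  obtain ⟨H, hH, hmin⟩ := exists_minimalFor_of_wellFoundedLT
    (fun H : SimpleGraph V => ∀ v, (H.neighborSet v).ncard = (G.neighborSet v).ncard)
    (fun H => Nat.card H.ConnectedComponent) ⟨G, fun _ => rfl⟩
  refine ⟨H, ⟨by_contra fun hconn => ?_⟩, hH⟩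
  have hnac := not_isAcyclic_of_not_preconnected hconn
    (card_edgeSet_eq_of_ncard_neighborSet_eq hH ▸ hE)
  obtain ⟨e, he, hbr⟩ := by simpa [isAcyclic_iff_forall_isBridge] using hnac
  induction e using Sym2.ind with | h a b =>
  obtain ⟨c, hc⟩ : ∃ c, ¬H.Reachable a c := by
    by_contra! h
    exact hconn fun u v => (h u).symm.trans (h v)
  obtain ⟨d, hd⟩ : (H.neighborSet c).Nonempty :=
    Set.nonempty_of_ncard_ne_zero (hH c ▸ (Set.ncard_pos (Set.toFinite _)).mpr (hpos c)).ne'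
  have hlt := card_connectedComponent_twoSwitch_lt he hd hbr hc
  have hdeg := (IsSwitchable.of_not_reachable he hd hc).ncard_neighborSet_twoSwitch
  exact hlt.not_ge (hmin (fun v => (hdeg v).trans (hH v)) hlt.le)

end Components

section HavelHakimi

variable {G : SimpleGraph V}

lemma exists_adj_not_adj_of_ncard_le [Finite V] {i j z : V} (hzj : G.Adj z j)
    (hzi : ¬G.Adj z i) (hiz : i ≠ z)
    (hle : (G.neighborSet j).ncard ≤ (G.neighborSet i).ncard) :
    ∃ k, G.Adj i k ∧ ¬G.Adj j k ∧ k ≠ j := by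
  by_contra! h
  have hsub : G.neighborSet i \ {j} ⊂ G.neighborSet j \ {i} := by
    refine (Set.ssubset_iff_of_subset ?_).mpr
      ⟨z, ⟨hzj.symm, hiz.symm⟩, fun hz => hzi hz.1.symm⟩
    rintro x ⟨hix, hxj⟩
    exact ⟨by_contra fun hjx => hxj (h x hix hjx), (G.ne_of_adj hix).symm⟩
  have hlt := Set.ncard_lt_ncard hsub
  by_cases hij : G.Adj i j
  · rw [← Set.ncard_sdiff_singleton_add_one (G.mem_neighborSet i j |>.mpr hij),
      ← Set.ncard_sdiff_singleton_add_one (G.mem_neighborSet j i |>.mpr hij.symm)] at hle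
    omega
  · rw [Set.sdiff_singleton_eq_self (show j ∉ G.neighborSet i from hij),
      Set.sdiff_singleton_eq_self (show i ∉ G.neighborSet j from (hij ·.symm))] at hlt
    omega

theorem exists_ncard_neighborSet_eq_and_neighborSet_eq [Finite V] {z : V} {B : Set V}
    (hzB : z ∉ B) (hB : B.ncard = (G.neighborSet z).ncard)
    (hdom : ∀ i ∈ B, ∀ j ∉ B, j ≠ z →
      (G.neighborSet j).ncard ≤ (G.neighborSet i).ncard) :
    ∃ H : SimpleGraph V, (∀ v, (H.neighborSet v).ncard = (G.neighborSet v).ncard) ∧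
      H.neighborSet z = B := by
  obtain ⟨H, hH, hmin⟩ := exists_minimalFor_of_wellFoundedLT
    (fun H : SimpleGraph V => ∀ v, (H.neighborSet v).ncard = (G.neighborSet v).ncard)
    (fun H => (B \ H.neighborSet z).ncard) ⟨G, fun _ => rfl⟩
  have hcard : (H.neighborSet z).ncard = B.ncard := (hH z).trans hB.symm
  refine ⟨H, hH, by_contra fun hne => ?_⟩
  obtain ⟨i, hiB, hiz⟩ : ∃ i ∈ B, i ∉ H.neighborSet z := Set.not_subset.mp fun hsub =>
    hne (Set.eq_of_subset_of_ncard_le hsub hcard.le).symm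
  obtain ⟨j, hjz, hjB⟩ : ∃ j ∈ H.neighborSet z, j ∉ B := Set.not_subset.mp fun hsub =>
    hne (Set.eq_of_subset_of_ncard_le hsub hcard.ge)
  have hzi : z ≠ i := fun h => hzB (h ▸ hiB)
  obtain ⟨k, hik, hjk, hkj⟩ := exists_adj_not_adj_of_ncard_le hjz hiz hzi.symm
    (by simpa only [hH] using hdom i hiB j hjB (H.ne_of_adj hjz).symm)
  have hsw : H.IsSwitchable z j i k := ⟨hjz, hik, hiz, hjk, hzi, hkj.symm⟩
  have hlt : (B \ (H.twoSwitch z j i k).neighborSet z).ncard < (B \ H.neighborSet z).ncard := by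
    have : B \ (H.twoSwitch z j i k).neighborSet z = (B \ H.neighborSet z) \ {i} := by
      rw [hsw.neighborSet_twoSwitch_left]
      ext x
      simp only [Set.mem_sdiff, Set.mem_insert_iff, Set.mem_singleton_iff]
      grind
    rw [this]
    exact Set.ncard_sdiff_singleton_lt_of_mem ⟨hiB, hiz⟩
  exact hlt.not_ge (hmin (fun v => (hsw.ncard_neighborSet_twoSwitch v).trans (hH v)) hlt.le)

end HavelHakimi

section VertexDeletion

variable {W : Type*} (e : W ↪ V) {z : V}

lemma ncard_neighborSet_comap_add_ite [Finite V] {G : SimpleGraph V} (he : Set.range e = {z}ᶜ)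
    {T : Set W} [DecidablePred (· ∈ T)] (hz : G.neighborSet z = e '' T) (w : W) :
    ((G.comap e).neighborSet w).ncard + (if w ∈ T then 1 else 0) =
      (G.neighborSet (e w)).ncard := by
  have himage : e '' (G.comap e).neighborSet w = G.neighborSet (e w) \ {z} := by
    change e '' (e ⁻¹' G.neighborSet (e w)) = _
    rw [Set.image_preimage_eq_inter_range, he, Set.sdiff_eq]
  have hmem : z ∈ G.neighborSet (e w) ↔ w ∈ T := by
    rw [mem_neighborSet, G.adj_comm, ← mem_neighborSet, hz, e.injective.mem_set_image]
  rw [← Set.ncard_image_of_injective _ e.injective, himage]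
  split_ifs with hw
  · exact Set.ncard_sdiff_singleton_add_one (hmem.mpr hw)
  · rw [Set.sdiff_singleton_eq_self (hw ∘ hmem.mp), add_zero]

lemma exists_comap_eq_and_neighborSet_eq (hz : z ∉ Set.range e) (G' : SimpleGraph W)
    (T : Set W) : ∃ G : SimpleGraph V, G.comap e = G' ∧ G.neighborSet z = e '' T := by
  have hne (w : W) : e w ≠ z := fun h => hz ⟨w, h⟩
  refine ⟨G'.map e ⊔ fromEdgeSet ((fun w => s(z, e w)) '' T), ?_, ?_⟩
  · ext u v
    simp [hne, eq_comm (a := z)]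
  · ext v
    simp only [mem_neighborSet, sup_adj, map_adj, fromEdgeSet_adj, Set.mem_image]
    grind

end VertexDeletion

end SimpleGraph

open SimpleGraph

lemma graphic_iff_exists_ncard {n : ℕ} {s : Fin n → ℕ} :
    Graphic n s ↔ ∃ G : SimpleGraph (Fin n), ∀ i, (G.neighborSet i).ncard = s i := by
  classical
  refine ⟨fun ⟨G, _, hG⟩ => ⟨G, fun i => ?_⟩,
    fun ⟨G, hG⟩ => ⟨G, inferInstance, fun i => ?_⟩⟩
  · rw [ncard_neighborSet_eq_degree, hG]
  · rw [← ncard_neighborSet_eq_degree, hG]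

lemma connectedGraphic_iff_exists_ncard {n : ℕ} {s : Fin n → ℕ} :
    ConnectedGraphic n s ↔
      ∃ G : SimpleGraph (Fin n), G.Connected ∧ ∀ i, (G.neighborSet i).ncard = s i := by
  classical
  refine ⟨fun ⟨G, _, hc, hG⟩ => ⟨G, hc, fun i => ?_⟩,
    fun ⟨G, hc, hG⟩ => ⟨G, inferInstance, hc, fun i => ?_⟩⟩
  · rw [ncard_neighborSet_eq_degree, hG]
  · rw [← ncard_neighborSet_eq_degree, hG]

section Residual

variable {m : ℕ}

lemma ncard_image_succ_setOf_val_lt {k : ℕ} (hk : k ≤ m) :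
    (Fin.succ '' {j : Fin m | j.val < k}).ncard = k := by
  rw [Set.ncard_image_of_injective _ (Fin.succ_injective m), ← Fin.range_castLE hk,
    Set.ncard_range_of_injective (Fin.castLE_injective hk), Nat.card_fin]

theorem exists_residual_graph_of_antitone {G : SimpleGraph (Fin (m + 1))} {s : Fin (m + 1) → ℕ}
    (hG : ∀ v, (G.neighborSet v).ncard = s v) (hs : Antitone s) (hs0 : s 0 ≤ m) :
    ∃ G' : SimpleGraph (Fin m), ∀ j,
      (G'.neighborSet j).ncard + (if j.val < s 0 then 1 else 0) = s j.succ := by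
  have hdom : ∀ i ∈ Fin.succ '' {j : Fin m | j.val < s 0},
      ∀ j ∉ Fin.succ '' {j | j.val < s 0}, j ≠ 0 →
        (G.neighborSet j).ncard ≤ (G.neighborSet i).ncard := by
    rintro _ ⟨i, hi, rfl⟩ j hj hj0
    obtain ⟨j, rfl⟩ := Fin.exists_succ_eq.mpr hj0
    simp only [Set.mem_ofPred_eq, Set.mem_image, Fin.succ_inj, exists_eq_right, not_lt] at hi hj
    rw [hG, hG]
    exact hs (Fin.succ_le_succ_iff.mpr (Fin.le_def.mpr (by omega)))
  obtain ⟨H, hH, hHz⟩ := G.exists_ncard_neighborSet_eq_and_neighborSet_eq (by simp)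
    (by rw [ncard_image_succ_setOf_val_lt hs0, hG]) hdom
  refine ⟨H.comap (Fin.succEmb m), fun j => ?_⟩
  have := ncard_neighborSet_comap_add_ite (Fin.succEmb m) (z := 0) (by simp)
    (by simpa using hHz) j
  simpa [hH, hG] using this

theorem exists_extension_of_residual_graph (G' : SimpleGraph (Fin m)) {k : ℕ} (hk : k ≤ m) :
    ∃ H : SimpleGraph (Fin (m + 1)), (H.neighborSet 0).ncard = k ∧ ∀ j,
      (H.neighborSet j.succ).ncard = (G'.neighborSet j).ncard + if j.val < k then 1 else 0 := by
  obtain ⟨H, hH, hHz⟩ := exists_comap_eq_and_neighborSet_eq (Fin.succEmb m) (z := 0) (by simp)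
    G' {j | j.val < k}
  refine ⟨H, by simpa [hHz] using ncard_image_succ_setOf_val_lt hk, fun j => ?_⟩
  have := ncard_neighborSet_comap_add_ite (Fin.succEmb m) (by simp) hHz j
  rw [hH] at this
  simpa using this.symm

end Residual

theorem connected_graphic_iff (n : ℕ) (hn : 1 ≤ n) (s : Fin n → ℕ)
    (hpos : ∀ i, 0 < s i) (hmono : Antitone s)
    (hmax : s ⟨0, hn⟩ ≤ n - 1)
    (s' : Fin (n - 1) → ℕ)
    (hs' : ∀ j : Fin (n - 1),
      s' j = if j.val + 1 ≤ s ⟨0, hn⟩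
             then s ⟨j.val + 1, by omega⟩ - 1
             else s ⟨j.val + 1, by omega⟩) :
    ConnectedGraphic n s ↔ Graphic (n - 1) s' ∧ 2 * (n - 1) ≤ ∑ i, s i := by
  obtain ⟨m, rfl⟩ : ∃ m, n = m + 1 := ⟨n - 1, by omega⟩
  -- `m + 1 - 1` reduces to `m`, so both restatements are definitional.
  replace hmax : s 0 ≤ m := hmax
  replace hs' : ∀ j : Fin m, s' j = if j.val < s 0 then s j.succ - 1 else s j.succ := hs'
  rw [connectedGraphic_iff_exists_ncard, graphic_iff_exists_ncard]
  constructor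
  · rintro ⟨G, hconn, hG⟩
    obtain ⟨G', hG'⟩ := exists_residual_graph_of_antitone hG hmono hmax
    refine ⟨⟨G', fun j => ?_⟩, ?_⟩
    · have := hG' j
      rw [hs' j]
      split_ifs at this ⊢ <;> omega
    · have := hconn.card_vert_le_card_edgeSet_add_one
      have := G.sum_ncard_neighborSet_eq_two_mul_card_edgeSet
      simp only [hG, Nat.card_fin] at *
      omega
  · rintro ⟨⟨G', hG'⟩, hsum⟩
    obtain ⟨H, hH0, hHsucc⟩ := exists_extension_of_residual_graph (m := m) G' hmax
    have hH : ∀ v, (H.neighborSet v).ncard = s v := Fin.cases hH0 fun j => by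
      have := hpos j.succ
      rw [hHsucc, hG', hs' j]
      split_ifs <;> omega
    obtain ⟨K, hK, hKH⟩ := H.exists_connected_ncard_neighborSet_eq
      (fun v => Set.nonempty_of_ncard_ne_zero (hH v ▸ (hpos v).ne'))
      (by
        have := H.sum_ncard_neighborSet_eq_two_mul_card_edgeSet
        simp only [hH, Nat.card_fin] at this ⊢
        omega)
    exact ⟨K, hK, fun v => (hKH v).trans (hH v)⟩
end

section
/- Let n ≥ 2 and let s = (s_1, ..., s_n) be a sequence of positive integers with s_i ≥ s_{i+1} for i = 1, ..., n-1 and s_n ≤ n-1. If s is connected and graphic, then the sequence s' = (s_1 - 1, s_2 - 1, ..., s_{s_n} - 1, s_{s_n+1}, ..., s_{n-1}) of length n-1 (obtained by deleting the last term s_n and subtracting 1 from each of the first s_n terms) is graphic and s'_1 + ... + s'_{n-1} ≥ 2(n-2). -/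
/-!
A 2-switch along an alternating 4-cycle `a b c d` (trade the edges `ab`, `cd` for `bc`, `da`)
preserves all degrees. As long as the last vertex `v` has a neighbour `j` outside the first
`s v` vertices and misses a vertex `i` among them, `s j ≤ s i` yields a neighbour `w` of `i`
that is not adjacent to `j`, and switching along `i w j v` replaces `j` by `i` among the
neighbours of `v`. So some realization of `s` joins `v` exactly to the first `s v` vertices,
and deleting `v` from it realizes `s'`.

For the sum, `∑ s' = ∑ s - 2 s v`. If `s v ≥ 2` then `∑ s ≥ n s v` by monotonicity, and if
`s v ≤ 1` then connectedness gives `∑ s = 2 |E| ≥ 2 (n - 1)`.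
-/

open Finset SimpleGraph

namespace SimpleGraph

variable {V : Type*} (G : SimpleGraph V) {a b c d x : V}

def switch (a b c d : V) : SimpleGraph V :=
  (G \ edge a b) \ edge c d ⊔ edge b c ⊔ edge d a

instance [DecidableEq V] [DecidableRel G.Adj] : DecidableRel (G.switch a b c d).Adj :=
  inferInstanceAs (DecidableRel ((G \ edge a b) \ edge c d ⊔ edge b c ⊔ edge d a).Adj)

lemma switch_rotate (a b c d : V) : G.switch a b c d = G.switch c d a b := by
  rw [switch, switch, sdiff_sdiff_comm, sup_right_comm]

lemma switch_reverse (a b c d : V) : G.switch a b c d = G.switch b a d c := by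
  rw [switch, switch, edge_comm b a, edge_comm d c, edge_comm a d, edge_comm c b,
    sup_right_comm]

variable [Fintype V] [DecidableEq V] [DecidableRel G.Adj]

lemma neighborFinset_switch_left (hab : a ≠ b) (hac : a ≠ c) (had : a ≠ d) :
    (G.switch a b c d).neighborFinset a = insert d ((G.neighborFinset a).erase b) := by
  ext y
  simp only [mem_neighborFinset, mem_insert, mem_erase]
  simp only [switch, sup_adj, sdiff_adj, edge_adj]
  grind [G.ne_of_adj]

lemma neighborFinset_switch_of_ne (ha : x ≠ a) (hb : x ≠ b) (hc : x ≠ c) (hd : x ≠ d) :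
    (G.switch a b c d).neighborFinset x = G.neighborFinset x := by
  ext y
  simp only [mem_neighborFinset]
  simp only [switch, sup_adj, sdiff_adj, edge_adj]
  grind

lemma degree_switch_left (hab : G.Adj a b) (had : ¬G.Adj a d) (hac : a ≠ c) (had' : a ≠ d) :
    (G.switch a b c d).degree a = G.degree a := by
  rw [← card_neighborFinset_eq_degree, ← card_neighborFinset_eq_degree,
    G.neighborFinset_switch_left hab.ne hac had', card_insert_of_notMem (by simp [had]),
    card_erase_add_one (by simpa using hab)]

lemma degree_switch (hab : G.Adj a b) (hcd : G.Adj c d) (hbc : ¬G.Adj b c) (hda : ¬G.Adj d a)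
    (hac : a ≠ c) (hbd : b ≠ d) (hbc' : b ≠ c) (hda' : d ≠ a) (x : V) :
    (G.switch a b c d).degree x = G.degree x := by
  by_cases hxa : x = a
  · rw [hxa]
    exact G.degree_switch_left hab (fun h => hda h.symm) hac hda'.symm
  by_cases hxb : x = b
  · rw [hxb]
    convert G.degree_switch_left hab.symm hbc hbd hbc' using 2
    exact G.switch_reverse a b c d
  by_cases hxc : x = c
  · rw [hxc]
    convert G.degree_switch_left hcd (fun h => hbc h.symm) hac.symm hbc'.symm using 2
    exact G.switch_rotate a b c d
  by_cases hxd : x = d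
  · rw [hxd]
    convert G.degree_switch_left hcd.symm hda hbd.symm hda' using 2
    rw [G.switch_rotate a, G.switch_reverse c]
  simp only [degree, G.neighborFinset_switch_of_ne hxa hxb hxc hxd]

lemma exists_adj_not_adj_of_degree_le {i j v : V} (hvj : G.Adj v j) (hvi : ¬G.Adj v i)
    (hiv : i ≠ v) (hji : G.degree j ≤ G.degree i) :
    ∃ w, G.Adj i w ∧ w ≠ j ∧ ¬G.Adj j w := by
  by_contra! h
  have hsub : insert v ((G.neighborFinset i).erase j) ⊆ (G.neighborFinset j).erase i := by
    intro w hw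
    rcases mem_insert.mp hw with rfl | hw
    · simpa [hiv.symm] using hvj.symm
    · obtain ⟨hwj, hiw⟩ := mem_erase.mp hw
      rw [mem_neighborFinset] at hiw
      exact mem_erase.mpr ⟨(G.ne_of_adj hiw).symm, by simpa using h w hiw hwj⟩
  have hcard := card_le_card hsub
  rw [card_insert_of_notMem (by simp [G.adj_comm i v, hvi]), card_erase_eq_ite,
    card_erase_eq_ite, card_neighborFinset_eq_degree, card_neighborFinset_eq_degree] at hcard
  simp only [mem_neighborFinset, G.adj_comm j i] at hcard
  split_ifs at hcard <;> omega

lemma exists_degree_eq_neighborFinset_eq_insert_erase {i j v : V} (hvj : G.Adj v j)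
    (hvi : ¬G.Adj v i) (hiv : i ≠ v) (hji : G.degree j ≤ G.degree i) :
    ∃ (H : SimpleGraph V) (_ : DecidableRel H.Adj), (∀ x, H.degree x = G.degree x) ∧
      H.neighborFinset v = insert i ((G.neighborFinset v).erase j) := by
  obtain ⟨w, hiw, hwj, hjw⟩ := G.exists_adj_not_adj_of_degree_le hvj hvi hiv hji
  have hij : i ≠ j := fun h => hvi (h ▸ hvj)
  have hwv : w ≠ v := fun h => hvi (h ▸ hiw.symm)
  refine ⟨G.switch i w j v, inferInstance, G.degree_switch hiw hvj.symm
    (fun h => hjw h.symm) hvi hij hwv hwj hiv.symm, ?_⟩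
  convert G.neighborFinset_switch_left hvj.ne hwv.symm hiv.symm using 2
  rw [G.switch_rotate i, G.switch_reverse j]

lemma degree_comap_of_range_eq_compl_singleton {W : Type*} [Fintype W] {f : W → V}
    (hf : Function.Injective f) {v : V} (hrange : Set.range f = {v}ᶜ) (w : W) :
    (G.comap f).degree w = #((G.neighborFinset (f w)).erase v) := by
  rw [← card_neighborFinset_eq_degree, ← card_image_of_injective _ hf]
  congr 1
  ext x
  have hx : x ∈ Set.range f ↔ x ≠ v := by rw [hrange]; rfl
  simp only [mem_image, mem_neighborFinset, comap_adj, mem_erase]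
  constructor
  · rintro ⟨y, hy, rfl⟩
    exact ⟨hx.mp ⟨y, rfl⟩, hy⟩
  · rintro ⟨hxv, hadj⟩
    obtain ⟨y, rfl⟩ := hx.mpr hxv
    exact ⟨y, hadj, rfl⟩

omit [DecidableEq V] in
lemma Connected.two_mul_card_sub_one_le_sum_degrees (h : G.Connected) :
    2 * (Fintype.card V - 1) ≤ ∑ v, G.degree v := by
  have := h.card_vert_le_card_edgeSet_add_one
  rw [Nat.card_eq_fintype_card, Nat.card_eq_fintype_card, ← edgeFinset_card] at this
  rw [sum_degrees_eq_twice_card_edges]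
  omega

end SimpleGraph

theorem exists_degree_eq_adj_iff_val_lt {n : ℕ} {s : Fin n → ℕ} (hs : Antitone s) {v : Fin n}
    (hv : s v ≤ v) (G : SimpleGraph (Fin n)) [DecidableRel G.Adj] (hG : ∀ a, G.degree a = s a) :
    ∃ (H : SimpleGraph (Fin n)) (_ : DecidableRel H.Adj),
      (∀ a, H.degree a = s a) ∧ ∀ b, H.Adj v b ↔ (b : ℕ) < s v := by
  -- each switch replaces a neighbour of `v` by one of smaller index
  induction hm : ∑ b ∈ G.neighborFinset v, (b : ℕ) using Nat.strong_induction_on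
    generalizing G with
  | _ m ih =>
  set F : Finset (Fin n) := {b | (b : ℕ) < s v}
  by_cases hF : G.neighborFinset v = F
  · exact ⟨G, inferInstance, hG, fun b => by simpa [F] using congrArg (b ∈ ·) hF⟩
  have hcard : #(G.neighborFinset v) = #F := by
    rw [Fin.card_filter_val_lt, card_neighborFinset_eq_degree, hG]
    omega
  obtain ⟨j, hjN, hjF⟩ := not_subset.mp fun h => hF (eq_of_subset_of_card_le h hcard.ge)
  obtain ⟨i, hiF, hiN⟩ := not_subset.mp fun h => hF (eq_of_subset_of_card_le h hcard.le).symm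
  simp only [F, mem_filter_univ, not_lt] at hiF hjF
  rw [mem_neighborFinset] at hjN hiN
  have hij : i < j := Fin.lt_def.mpr (by omega)
  obtain ⟨H, _, hHG, hHv⟩ := G.exists_degree_eq_neighborFinset_eq_insert_erase hjN hiN
    (Fin.ne_of_val_ne (by omega)) (by rw [hG, hG]; exact hs hij.le)
  refine ih _ ?_ H (fun a => (hHG a).trans (hG a)) rfl
  have hiN' : i ∉ (G.neighborFinset v).erase j := fun h => hiN (by simpa using mem_of_mem_erase h)
  rw [hHv, sum_insert hiN', ← hm, ← add_sum_erase _ _ ((G.mem_neighborFinset v j).mpr hjN)]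
  exact Nat.add_lt_add_right hij _

lemma sum_add_two_mul_eq_sum {m : ℕ} {s : Fin (m + 1) → ℕ} (hs : Antitone s)
    (hk : s (Fin.last m) ≤ m) {s' : Fin m → ℕ}
    (hs' : ∀ j : Fin m, s' j =
      if (j : ℕ) + 1 ≤ s (Fin.last m) then s j.castSucc - 1 else s j.castSucc) :
    ∑ j, s' j + 2 * s (Fin.last m) = ∑ i, s i := by
  have hterm (j : Fin m) : s' j + (if (j : ℕ) < s (Fin.last m) then 1 else 0) = s j.castSucc := by
    have := hs (Fin.le_last j.castSucc)
    rw [hs' j]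
    split_ifs <;> omega
  have hcount : ∑ j : Fin m, (if (j : ℕ) < s (Fin.last m) then 1 else 0) = s (Fin.last m) := by
    rw [sum_boole, Nat.cast_id, Fin.card_filter_val_lt, min_eq_right hk]
  rw [Fin.sum_univ_castSucc, ← sum_congr rfl fun j _ => hterm j, sum_add_distrib, hcount]
  ring

theorem connected_havel_hakimi_mp (n : ℕ) (hn : 2 ≤ n) (s : Fin n → ℕ)
    (hmono : Antitone s)
    (hmin : s ⟨n - 1, by omega⟩ ≤ n - 1)
    (s' : Fin (n - 1) → ℕ)
    (hs' : ∀ j : Fin (n - 1),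
      s' j = if j.val + 1 ≤ s ⟨n - 1, by omega⟩
             then s ⟨j.val, by omega⟩ - 1
             else s ⟨j.val, by omega⟩) :
    ConnectedGraphic n s → Graphic (n - 1) s' ∧ 2 * (n - 2) ≤ ∑ j, s' j := by
  rintro ⟨G, _, hconn, hG⟩
  obtain ⟨m, rfl⟩ : ∃ m, n = m + 1 := ⟨n - 1, by omega⟩
  change Graphic m s' ∧ 2 * (m - 1) ≤ ∑ j : Fin m, s' j
  have hk : s (Fin.last m) ≤ m := hmin
  obtain ⟨H, _, hH, hHv⟩ := exists_degree_eq_adj_iff_val_lt hmono hk G hG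
  refine ⟨⟨H.comap Fin.castSucc, inferInstance, fun j => ?_⟩, ?_⟩
  · rw [H.degree_comap_of_range_eq_compl_singleton (Fin.castSucc_injective m)
      (Set.ext fun _ => Fin.exists_castSucc_eq), card_erase_eq_ite,
      card_neighborFinset_eq_degree, hH, hs' j]
    simp only [mem_neighborFinset, H.adj_comm _ (Fin.last m), hHv, Fin.val_castSucc,
      Nat.lt_iff_add_one_le]
    rfl
  · have hsum := sum_add_two_mul_eq_sum hmono hk hs'
    have hdeg := hconn.two_mul_card_sub_one_le_sum_degrees
    simp only [hG, Fintype.card_fin] at hdeg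
    have hsum_ge : (m + 1) * s (Fin.last m) ≤ ∑ i, s i := by
      simpa using card_nsmul_le_sum univ s _ fun i _ => hmono (Fin.le_last i)
    rcases le_or_gt (s (Fin.last m)) 1 with hk1 | hk2
    · omega
    · have hm : (m + 1) * s (Fin.last m) = (m - 1) * s (Fin.last m) + 2 * s (Fin.last m) := by
        rw [← add_mul]; congr 1; omega
      have := Nat.mul_le_mul_left (m - 1) hk2
      omega
end

section
/- Let n ≥ 1 and let s = (s_1, ..., s_n) be a sequence of positive integers. If s is graphic and s_1 + s_2 + ... + s_n = 2(n-1), then s is connected and graphic; indeed s is realisable by a tree (a connected simple graph on n vertices with n-1 edges). -/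
open Finset

section Sequences

variable {V : Type*} {S : Finset V} {d : V → ℕ}

lemma exists_eq_one_of_sum_lt_two_mul_card (hpos : ∀ x ∈ S, 0 < d x)
    (hsum : ∑ x ∈ S, d x < 2 * #S) : ∃ v ∈ S, d v = 1 := by
  obtain ⟨v, hvS, hv⟩ := exists_lt_of_sum_lt (f := d) (g := fun _ => 2)
    (by rwa [sum_const, smul_eq_mul, mul_comm])
  exact ⟨v, hvS, by have := hpos v hvS; omega⟩

lemma exists_two_le_of_card_lt_sum (hsum : #S < ∑ x ∈ S, d x) : ∃ w ∈ S, 2 ≤ d w :=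
  exists_lt_of_sum_lt (f := fun _ => 1) (g := d) (by rwa [sum_const, smul_eq_mul, mul_one])

lemma sum_update_pred_add_one [DecidableEq V] {w : V} (hw : w ∈ S) (hdw : 0 < d w) :
    ∑ x ∈ S, Function.update d w (d w - 1) x + 1 = ∑ x ∈ S, d x := by
  rw [sum_update_of_mem hw, sdiff_singleton_eq_erase, ← add_sum_erase S d hw]
  omega

end Sequences

namespace SimpleGraph

variable {V : Type*} [Fintype V] [DecidableEq V]

lemma neighborFinset_sup_edge_left (G : SimpleGraph V) [DecidableRel G.Adj] {v w : V}
    (hvw : v ≠ w) : (G ⊔ edge v w).neighborFinset v = insert w (G.neighborFinset v) := by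
  ext y
  simp [edge_adj, hvw]
  grind

lemma neighborFinset_sup_edge_right (G : SimpleGraph V) [DecidableRel G.Adj] {v w : V}
    (hvw : v ≠ w) : (G ⊔ edge v w).neighborFinset w = insert v (G.neighborFinset w) := by
  ext y
  simp [edge_adj, hvw.symm]
  grind

lemma neighborFinset_sup_edge_of_ne (G : SimpleGraph V) [DecidableRel G.Adj] {v w x : V}
    (hv : x ≠ v) (hw : x ≠ w) : (G ⊔ edge v w).neighborFinset x = G.neighborFinset x := by
  ext y
  simp [edge_adj, hv, hw]

lemma degree_sup_edge (G : SimpleGraph V) [DecidableRel G.Adj] {v w : V}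
    (hvw : v ≠ w) (hn : ¬G.Adj v w) (x : V) :
    (G ⊔ edge v w).degree x = G.degree x + if x = v ∨ x = w then 1 else 0 := by
  simp only [← card_neighborFinset_eq_degree]
  split_ifs with hx
  · rcases hx with rfl | rfl
    · rw [neighborFinset_sup_edge_left G hvw, card_insert_of_notMem (by simpa)]
    · rw [neighborFinset_sup_edge_right G hvw, card_insert_of_notMem (by simpa [adj_comm])]
  · rw [neighborFinset_sup_edge_of_ne G (not_or.mp hx).1 (not_or.mp hx).2, add_zero]

/-- Working inside a fixed vertex type, with the vertices outside `S` isolated, lets the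
induction shrink `S` without relabelling vertices. -/
def ConnectsAndRealisesOn (G : SimpleGraph V) [DecidableRel G.Adj] (S : Finset V) (d : V → ℕ) :
    Prop :=
  (∀ x ∈ S, ∀ y ∈ S, G.Reachable x y) ∧ ∀ x, G.degree x = if x ∈ S then d x else 0

lemma connectsAndRealisesOn_bot_singleton {d : V → ℕ} {w : V} (hw : d w = 0) :
    (⊥ : SimpleGraph V).ConnectsAndRealisesOn {w} d := by
  refine ⟨?_, fun x => ?_⟩
  · simp only [mem_singleton]
    rintro x rfl y rfl
    rfl
  · by_cases hx : x = w <;> simp [hx, hw]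

lemma ConnectsAndRealisesOn.sup_edge {G : SimpleGraph V} [DecidableRel G.Adj] {S : Finset V}
    {d e : V → ℕ} {v w : V} (hG : G.ConnectsAndRealisesOn S d) (hv : v ∉ S) (hw : w ∈ S)
    (hev : e v = 1) (hew : e w = d w + 1) (he : ∀ x ∈ S, x ≠ w → e x = d x) :
    (G ⊔ edge v w).ConnectsAndRealisesOn (insert v S) e := by
  have hvw : v ≠ w := by rintro rfl; exact hv hw
  have hdv : G.degree v = 0 := by simp [hG.2, hv]
  have hreach : ∀ x ∈ insert v S, (G ⊔ edge v w).Reachable x w := by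
    simp only [mem_insert, forall_eq_or_imp]
    exact ⟨Adj.reachable (by simp [edge_adj, hvw]),
      fun x hx => (hG.1 x hx w hw).mono le_sup_left⟩
  refine ⟨fun x hx y hy => (hreach x hx).trans (hreach y hy).symm, fun x => ?_⟩
  rw [degree_sup_edge G hvw (fun h => hdv.not_gt h.degree_pos_left), hG.2]
  by_cases hxv : x = v
  · subst hxv; simp [hv, hev]
  by_cases hxw : x = w
  · subst hxw; simp [hw, hew, hxv]
  by_cases hx : x ∈ S
  · simp [hx, hxv, hxw, he x hx hxw]
  · simp [hx, hxv, hxw]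

theorem exists_connectsAndRealisesOn (k : ℕ) (S : Finset V) (hS : #S = k + 1) (d : V → ℕ)
    (hpos : ∀ x ∈ S, 0 < d x) (hsum : ∑ x ∈ S, d x = 2 * k) :
    ∃ G : SimpleGraph V, ∃ _ : DecidableRel G.Adj, G.ConnectsAndRealisesOn S d := by
  induction k generalizing S d with
  | zero =>
    obtain ⟨a, rfl⟩ := card_eq_one.mp hS
    simp only [sum_singleton, mul_zero] at hsum
    exact absurd hsum (hpos a (mem_singleton_self a)).ne'
  | succ k ih =>
    obtain ⟨v, hvS, hdv⟩ := exists_eq_one_of_sum_lt_two_mul_card hpos (by omega)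
    have hT : #(S.erase v) = k + 1 := by rw [card_erase_of_mem hvS, hS]; rfl
    have hsumT : ∑ x ∈ S.erase v, d x = 2 * k + 1 := by
      have := add_sum_erase S d hvS; omega
    -- Maximality of `d w` gives `2 ≤ d w` once `S` has at least three vertices.
    obtain ⟨w, hwT, hwmax⟩ := exists_max_image (S.erase v) d (card_pos.mp (by omega))
    have hdw : 0 < d w := hpos w (mem_of_mem_erase hwT)
    set d' : V → ℕ := Function.update d w (d w - 1)
    have hsum' : ∑ x ∈ S.erase v, d' x + 1 = ∑ x ∈ S.erase v, d x :=
      sum_update_pred_add_one hwT hdw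
    obtain ⟨G, _, hG⟩ :
        ∃ G : SimpleGraph V, ∃ _ : DecidableRel G.Adj, G.ConnectsAndRealisesOn (S.erase v) d' := by
      rcases k with _ | k
      · obtain ⟨u, hu⟩ := card_eq_one.mp hT
        obtain rfl : w = u := by simpa [hu] using hwT
        refine ⟨⊥, inferInstance, hu ▸ connectsAndRealisesOn_bot_singleton ?_⟩
        simp only [hu, sum_singleton] at hsumT
        simp [d', hsumT]
      · obtain ⟨x, hxT, hx⟩ := exists_two_le_of_card_lt_sum (d := d) (by omega : #(S.erase v) < _)
        have h2 : 2 ≤ d w := hx.trans (hwmax x hxT)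
        refine ih (S.erase v) hT d' (fun x hx => ?_) (by omega)
        by_cases hxw : x = w
        · subst hxw; simp [d']; omega
        · simpa [d', hxw] using hpos x (mem_of_mem_erase hx)
    refine ⟨G ⊔ edge v w, inferInstance, ?_⟩
    rw [← insert_erase hvS]
    exact hG.sup_edge (notMem_erase v S) hwT hdv (by simp [d']; omega)
      (fun x _ hxw => by simp [d', hxw])

theorem exists_connected_degree_eq [Nonempty V] (d : V → ℕ) (hpos : ∀ x, 0 < d x)
    (hsum : ∑ x, d x = 2 * (Fintype.card V - 1)) :
    ∃ G : SimpleGraph V, ∃ _ : DecidableRel G.Adj, G.Connected ∧ ∀ x, G.degree x = d x := by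
  obtain ⟨G, _, hreach, hdeg⟩ := exists_connectsAndRealisesOn (Fintype.card V - 1) univ
    (by rw [card_univ]; have := Fintype.card_pos (α := V); omega) d (fun x _ => hpos x) hsum
  exact ⟨G, inferInstance, ⟨fun x y => hreach x (mem_univ x) y (mem_univ y)⟩,
    fun x => by simp [hdeg]⟩

end SimpleGraph

theorem graphic_sum_eq_realisable_by_tree_general (n : ℕ) (hn : 1 ≤ n) (s : Fin n → ℕ)
    (hpos : ∀ i, 0 < s i)
    (hsum : ∑ i, s i = 2 * (n - 1)) :
    ConnectedGraphic n s ∧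
      ∃ G : SimpleGraph (Fin n), ∃ _ : DecidableRel G.Adj,
        G.Connected ∧ G.edgeFinset.card = n - 1 ∧ ∀ i, G.degree i = s i := by
  have : Nonempty (Fin n) := ⟨⟨0, hn⟩⟩
  obtain ⟨G, _, hconn, hdeg⟩ :=
    SimpleGraph.exists_connected_degree_eq s hpos (by rwa [Fintype.card_fin])
  have hedges : #G.edgeFinset = n - 1 := by
    have := G.sum_degrees_eq_twice_card_edges
    simp only [hdeg, hsum] at this
    omega
  exact ⟨⟨G, inferInstance, hconn, hdeg⟩, G, inferInstance, hconn, hedges, hdeg⟩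

theorem graphic_sum_eq_realisable_by_tree (n : ℕ) (hn : 1 ≤ n) (s : Fin n → ℕ)
    (hpos : ∀ i, 0 < s i) (hgraphic : Graphic n s)
    (hsum : ∑ i, s i = 2 * (n - 1)) :
    ConnectedGraphic n s ∧
      ∃ G : SimpleGraph (Fin n), ∃ _ : DecidableRel G.Adj,
        G.Connected ∧ G.edgeFinset.card = n - 1 ∧ ∀ i, G.degree i = s i :=
  graphic_sum_eq_realisable_by_tree_general n hn s hpos hsum
end
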